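/- Let k ≥ 4. For any 3-DSMI-CYC instance X, the k-DSMI-CYC instance X̂ produced by the dimension-lifting reduction has a weakly stable matching if and only if X has a weakly stable matching. -/

import Mathlib

open Classical

/-- Cyclic successor on `Fin k` (addition of `1` modulo `k`). -/
def fsucc {k : ℕ} (t : Fin k) : Fin k := ⟨(t.1 + 1) % k, Nat.mod_lt _ t.pos⟩

/-- Cyclic addition of a natural number, modulo `k`. -/
def fadd {k : ℕ} (t : Fin k) (s : ℕ) : Fin k := ⟨(t.1 + s) % k, Nat.mod_lt _ t.pos⟩

/-- An agent consists of an identifier and a type in `{0, …, k-1}`. -/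
abbrev Agent (ι : Type) (k : ℕ) := ι × Fin k

/-- A preference profile of a `k`-DSMI-CYC instance over identifier set `ι`:
each agent has a list of agents. -/
abbrev Prefs (ι : Type) (k : ℕ) := Agent ι k → List (Agent ι k)

/-- Validity of a `k`-DSMI-CYC instance: each preference list is duplicate-free and
contains only agents of the cyclically next type. -/
def ValidPrefs {ι : Type} {k : ℕ} (P : Prefs ι k) : Prop :=
  (∀ a, (P a).Nodup) ∧ ∀ a b, b ∈ P a → b.2 = fsucc a.2

/-- Completeness: every agent of the next type appears in the preference list
(this is the `k`-DSM-CYC special case). -/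
def CompletePrefs {ι : Type} {k : ℕ} (P : Prefs ι k) : Prop :=
  ∀ a b : Agent ι k, b.2 = fsucc a.2 → b ∈ P a

/-- `a` prefers `b` to `c`: `b` appears in `a`'s list, and `c` appears later or not at all. -/
def Prefers {ι : Type} [DecidableEq ι] {k : ℕ} (P : Prefs ι k) (a b c : Agent ι k) : Prop :=
  b ∈ P a ∧ (c ∉ P a ∨ (P a).idxOf b < (P a).idxOf c)

/-- A family: a `k`-tuple where the `t`-th member has type `t` and finds the next member
acceptable. -/
def IsFamily {ι : Type} {k : ℕ} (P : Prefs ι k) (F : Fin k → Agent ι k) : Prop :=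
  ∀ t, (F t).2 = t ∧ F (fsucc t) ∈ P (F t)

/-- A matching: a set of pairwise agent-disjoint families. -/
def IsMatching {ι : Type} {k : ℕ} (P : Prefs ι k) (μ : Set (Fin k → Agent ι k)) : Prop :=
  (∀ F ∈ μ, IsFamily P F) ∧ ∀ F ∈ μ, ∀ F' ∈ μ, ∀ t, F t = F' t → F = F'

/-- The partner `μ(a)` of agent `a` in matching `μ`: the next member of a family of `μ`
containing `a`, and `a` itself if `a` is unmatched. -/
noncomputable def partner {ι : Type} {k : ℕ} (μ : Set (Fin k → Agent ι k)) (a : Agent ι k) :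
    Agent ι k :=
  if h : ∃ F ∈ μ, F a.2 = a then h.choose (fsucc a.2) else a

/-- A strongly blocking family of `μ`: each member prefers the next member to its partner. -/
def StronglyBlocks {ι : Type} [DecidableEq ι] {k : ℕ} (P : Prefs ι k)
    (μ : Set (Fin k → Agent ι k)) (F : Fin k → Agent ι k) : Prop :=
  IsFamily P F ∧ ∀ t, Prefers P (F t) (F (fsucc t)) (partner μ (F t))

/-- A weakly stable matching: a matching admitting no strongly blocking family. -/
def WeaklyStable {ι : Type} [DecidableEq ι] {k : ℕ} (P : Prefs ι k)
    (μ : Set (Fin k → Agent ι k)) : Prop :=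
  IsMatching P μ ∧ ∀ F, ¬ StronglyBlocks P μ F

/-- The dimension-lifting reduction from a 3-DSMI-CYC instance `P` over identifiers `ι`
to a `k`-DSMI-CYC instance over identifiers `ι × ι` (`k ≥ 4`).  An agent is written
`((i, j), t)`.  Non-dummy agents are those of the form `((i, i), t)` with `t ∈ {0,1,2}`. -/
def liftP {ι : Type} [DecidableEq ι] (k : ℕ) (hk : 4 ≤ k) (P : Prefs ι 3) :
    Prefs (ι × ι) k := fun b =>
  if ht : b.2.1 < 3 then
    if b.1.1 = b.1.2 then
      if b.2.1 = 2 then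
        -- type 2 non-dummy: entries `(i, j', 3)` for `(j', 0)` in `P (i, 2)`, in order
        (P (b.1.1, (2 : Fin 3))).map fun c => ((b.1.1, c.1), fsucc b.2)
      else
        -- type 0 or 1 non-dummy: entries `(i', i', t+1)` for `(i', t+1)` in `P (i, t)`
        (P (b.1.1, (⟨b.2.1, ht⟩ : Fin 3))).map fun c => ((c.1, c.1), fsucc b.2)
    else []
  else
    if (b.1.2, (0 : Fin 3)) ∈ P (b.1.1, (2 : Fin 3)) then
      if b.2.1 = k - 1 then [((b.1.2, b.1.2), fsucc b.2)]
      else [((b.1.1, b.1.2), fsucc b.2)]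
    else []

/-- The family of the lifted instance corresponding to a family `(i₀,i₁,i₂)` of the
3-dimensional instance: `((i₀,i₀,0), (i₁,i₁,1), (i₂,i₂,2), (i₂,i₀,3), …, (i₂,i₀,k−1))`. -/
def liftFam {ι : Type} (k : ℕ) (G : Fin 3 → Agent ι 3) : Fin k → Agent (ι × ι) k :=
  fun t =>
    if h : t.1 < 3 then (((G ⟨t.1, h⟩).1, (G ⟨t.1, h⟩).1), t)
    else (((G (2 : Fin 3)).1, (G (0 : Fin 3)).1), t)

section DimLift

lemma fsucc_of_lt {k : ℕ} {t : Fin k} (h : t.1 + 1 < k) : fsucc t = ⟨t.1 + 1, h⟩ := by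
  simp [fsucc, Fin.ext_iff, Nat.mod_eq_of_lt h]

lemma fsucc_last {k : ℕ} {t : Fin k} (hk : 0 < k) (h : t.1 = k - 1) : fsucc t = ⟨0, hk⟩ := by
  have h' : t.1 + 1 = k := by omega
  simp [fsucc, Fin.ext_iff, h', Nat.mod_self]

lemma fsucc_ne {k : ℕ} (hk : 2 ≤ k) (t : Fin k) : (fsucc t).1 ≠ t.1 := by
  have := t.2
  simp only [fsucc]
  rcases Nat.lt_or_ge (t.1+1) k with h | h
  · rw [Nat.mod_eq_of_lt h]; omega
  · have h2 : t.1 + 1 = k := by omega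
    rw [h2, Nat.mod_self]; omega

lemma fsucc3_ne : ∀ t : Fin 3, fsucc t ≠ t := by decide

lemma indexOf_map_injOn {α β : Type*} [BEq α] [LawfulBEq α] [BEq β] [LawfulBEq β] (f : α → β) :
    ∀ (l : List α) (b : α), b ∈ l → (∀ c ∈ l, f c = f b → c = b) →
      (l.map f).idxOf (f b) = l.idxOf b := by
  intro l
  induction l with
  | nil => intro b hb; simp at hb
  | cons x xs ih =>
    intro b hb hinj
    simp only [List.map_cons, List.idxOf, List.findIdx_cons]
    by_cases hx : x = b
    · subst hx
      simp
    · have hfx : (f x == f b) = false := by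
        rw [beq_eq_false_iff_ne]
        exact fun h => hx (hinj x (by simp) h)
      have hxb : (x == b) = false := by
        rw [beq_eq_false_iff_ne]
        exact hx
      have hb' : b ∈ xs := by
        rcases List.mem_cons.1 hb with h | h
        · exact absurd h.symm hx
        · exact h
      have ihh := ih b hb' (fun c hc => hinj c (by simp [hc]))
      simp only [List.idxOf] at ihh
      rw [hfx, hxb, cond_false, cond_false, ihh]

lemma indexOf_map_agent {ι ι' : Type} [DecidableEq ι] [DecidableEq ι'] {m m' : ℕ}
    (f : Agent ι m → Agent ι' m') (l : List (Agent ι m)) (b : Agent ι m) (hb : b ∈ l)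
    (hinj : ∀ c ∈ l, f c = f b → c = b) :
    (l.map f).idxOf (f b) = l.idxOf b :=
  indexOf_map_injOn f l b hb hinj

lemma mem_map_iff_of_inj {α β : Type*} (f : α → β) (l : List α) (b : α)
    (hinj : ∀ c ∈ l, f c = f b → c = b) : f b ∈ l.map f ↔ b ∈ l := by
  constructor
  · intro h
    obtain ⟨c, hc, hfc⟩ := List.mem_map.1 h
    exact hinj c hc hfc ▸ hc
  · exact fun h => List.mem_map_of_mem h

variable {ι : Type} [DecidableEq ι] {k : ℕ}

lemma partner_spec {P : Prefs ι k} {μ : Set (Fin k → Agent ι k)}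
    (hμ : IsMatching P μ) {F : Fin k → Agent ι k} {a : Agent ι k}
    (hF : F ∈ μ) (ha : F a.2 = a) : partner μ a = F (fsucc a.2) := by
  have h : ∃ F ∈ μ, F a.2 = a := ⟨F, hF, ha⟩
  rw [partner, dif_pos h]
  have heq := hμ.2 _ h.choose_spec.1 _ hF a.2 (h.choose_spec.2.trans ha.symm)
  rw [heq]

lemma partner_unmatched {μ : Set (Fin k → Agent ι k)} {a : Agent ι k}
    (h : ¬ ∃ F ∈ μ, F a.2 = a) : partner μ a = a := dif_neg h

lemma fam_eta {m : ℕ} {P : Prefs ι m} {G : Fin m → Agent ι m} (hG : IsFamily P G) (t : Fin m) :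
    G t = ((G t).1, t) := Prod.ext rfl (hG t).1

/-- The way an original agent of type `fsucc a.2` is lifted into the preference
list of the lifted copy of `a`. -/
def liftIda (a : Agent ι 3) (τ : Fin k) : Agent ι 3 → Agent (ι × ι) k :=
  fun c => ((if a.2.1 = 2 then (a.1, c.1) else (c.1, c.1)), τ)

lemma liftIda_inj (a : Agent ι 3) (τ : Fin k) {b c : Agent ι 3} (h2 : c.2 = b.2)
    (h : liftIda a τ c = liftIda a τ b) : c = b := by
  unfold liftIda at h
  by_cases ha : a.2.1 = 2 <;>
    [skip; skip] <;>
    · simp only [ha, if_true, if_false, Prod.mk.injEq, if_pos, if_neg, ite_true, ite_false] at h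
      exact Prod.ext (by simpa using h.1) h2

variable (hk : 4 ≤ k) (P : Prefs ι 3)

lemma liftP_low (a : Agent ι 3) (tk : Fin k) (h : tk.1 = a.2.1) :
    liftP k hk P ((a.1, a.1), tk) = (P a).map (liftIda a (fsucc tk)) := by
  obtain ⟨i, s⟩ := a
  replace h : tk.1 = s.1 := h
  have h3 : tk.1 < 3 := lt_of_eq_of_lt h s.2
  have h' : (⟨tk.1, h3⟩ : Fin 3) = s := Fin.ext h
  simp only [liftP, liftIda, dif_pos h3, if_true]
  by_cases h2 : (s.1 : ℕ) = 2
  · rw [if_pos (h.trans h2)]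
    have hs : s = (2 : Fin 3) := Fin.ext h2
    subst hs
    simp [liftIda]
  · rw [if_neg (show ¬ tk.1 = 2 by omega), h']
    simp [liftIda, h2]

lemma liftP_high (i j : ι) (tk : Fin k) (h : ¬ tk.1 < 3) :
    liftP k hk P ((i, j), tk) =
      if (j, (0 : Fin 3)) ∈ P (i, (2 : Fin 3)) then
        (if tk.1 = k - 1 then [((j, j), fsucc tk)] else [((i, j), fsucc tk)])
      else [] := by
  simp only [liftP]
  rw [dif_neg h]

lemma liftFam_lt {G : Fin 3 → Agent ι 3} {tk : Fin k} (h : tk.1 < 3) :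
    liftFam k G tk = (((G ⟨tk.1, h⟩).1, (G ⟨tk.1, h⟩).1), tk) := dif_pos h

lemma liftFam_ge {G : Fin 3 → Agent ι 3} {tk : Fin k} (h : ¬ tk.1 < 3) :
    liftFam k G tk = (((G (2 : Fin 3)).1, (G (0 : Fin 3)).1), tk) := dif_neg h

lemma liftFam_snd {G : Fin 3 → Agent ι 3} (tk : Fin k) : (liftFam k G tk).2 = tk := by
  by_cases h : tk.1 < 3
  · rw [liftFam_lt h]
  · rw [liftFam_ge h]

lemma liftIda_ne2 {a : Agent ι 3} (h : a.2.1 ≠ 2) (τ : Fin k) (c : Agent ι 3) :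
    liftIda a τ c = ((c.1, c.1), τ) := by simp [liftIda, h]

lemma liftIda_eq2 {a : Agent ι 3} (h : a.2.1 = 2) (τ : Fin k) (c : Agent ι 3) :
    liftIda a τ c = ((a.1, c.1), τ) := by simp [liftIda, h]

lemma lift_mem_low {i j : ι} {s : Fin k} (s3 : Fin 3) (hs3 : s.1 = s3.1)
    {y : Agent (ι × ι) k} (hmem : y ∈ liftP k hk P ((i, j), s)) :
    i = j ∧ ∃ c ∈ P (i, s3), y = liftIda (i, s3) (fsucc s) c := by
  have h3 : s.1 < 3 := hs3 ▸ s3.2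
  by_cases hij : i = j
  · subst hij
    refine ⟨rfl, ?_⟩
    have hI : (i, (⟨s.1, h3⟩ : Fin 3)) = (i, s3) := by
      rw [Prod.mk.injEq]
      exact ⟨rfl, Fin.ext hs3⟩
    rw [liftP_low hk P (i, ⟨s.1, h3⟩) s rfl, hI] at hmem
    obtain ⟨c, hc, hy⟩ := List.mem_map.1 hmem
    exact ⟨c, hc, hy.symm⟩
  · exfalso
    simp only [liftP, dif_pos h3, if_neg hij] at hmem
    exact List.not_mem_nil hmem

lemma liftFam_isFamily {G : Fin 3 → Agent ι 3} (hG : IsFamily P G) :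
    IsFamily (liftP k hk P) (liftFam k G) := by
  intro t
  refine ⟨liftFam_snd t, ?_⟩
  have hG2 : G 2 = ((G 2).1, 2) := fam_eta hG 2
  have hG0 : G 0 = ((G 0).1, 0) := fam_eta hG 0
  have hj : ((G 0).1, (0 : Fin 3)) ∈ P ((G 2).1, (2 : Fin 3)) := by
    have h02 := (hG 2).2
    rwa [show fsucc (2 : Fin 3) = 0 from by decide, hG0, hG2] at h02
  by_cases h3 : t.1 < 3
  · rw [liftFam_lt h3]
    have hteq : t.1 = (G ⟨t.1, h3⟩).2.1 := by rw [(hG ⟨t.1, h3⟩).1]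
    rw [liftP_low hk P (G ⟨t.1, h3⟩) t hteq]
    by_cases h2 : t.1 = 2
    · have hk3' : (3:ℕ) < k := by omega
      have ht32 : (⟨t.1, h3⟩ : Fin 3) = 2 := Fin.ext h2
      have hfs : fsucc t = (⟨3, hk3'⟩ : Fin k) := by
        rw [fsucc_of_lt (show t.1 + 1 < k by omega)]
        exact Fin.ext (by simp [h2])
      have hmem : G 0 ∈ P (G ⟨t.1, h3⟩) := by
        rw [ht32]
        have h02 := (hG 2).2
        rwa [show fsucc (2 : Fin 3) = 0 from by decide] at h02
      have step1 : liftFam k G (⟨3, hk3'⟩ : Fin k) =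
          (((G 2).1, (G 0).1), (⟨3, hk3'⟩ : Fin k)) := liftFam_ge (by norm_num)
      have step2 : liftIda (G ⟨t.1, h3⟩) (⟨3, hk3'⟩ : Fin k) (G 0) =
          (((G 2).1, (G 0).1), (⟨3, hk3'⟩ : Fin k)) := by
        rw [liftIda_eq2 (show (G ⟨t.1, h3⟩).2.1 = 2 by rw [(hG ⟨t.1, h3⟩).1]; exact h2), ht32]
      rw [hfs, step1.trans step2.symm]
      exact List.mem_map_of_mem hmem
    · have ht1 : t.1 + 1 < 3 := by omega
      have hkk : t.1 + 1 < k := by omega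
      have hfs : fsucc t = (⟨t.1 + 1, hkk⟩ : Fin k) := fsucc_of_lt hkk
      have hfs3 : fsucc (⟨t.1, h3⟩ : Fin 3) = ⟨t.1 + 1, ht1⟩ := by
        rw [fsucc_of_lt (show (⟨t.1, h3⟩ : Fin 3).1 + 1 < 3 from ht1)]
      have step1 : liftFam k G (⟨t.1 + 1, hkk⟩ : Fin k) =
          (((G ⟨t.1+1, ht1⟩).1, (G ⟨t.1+1, ht1⟩).1), (⟨t.1 + 1, hkk⟩ : Fin k)) := liftFam_lt ht1
      have step2 : liftIda (G ⟨t.1, h3⟩) (⟨t.1 + 1, hkk⟩ : Fin k) (G (fsucc ⟨t.1, h3⟩)) =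
          (((G ⟨t.1+1, ht1⟩).1, (G ⟨t.1+1, ht1⟩).1), (⟨t.1 + 1, hkk⟩ : Fin k)) := by
        rw [liftIda_ne2 (show (G ⟨t.1, h3⟩).2.1 ≠ 2 by rw [(hG ⟨t.1, h3⟩).1]; exact h2), hfs3]
      rw [hfs, step1.trans step2.symm]
      exact List.mem_map_of_mem (hG ⟨t.1, h3⟩).2
  · rw [liftFam_ge h3, liftP_high hk P (G 2).1 (G 0).1 t h3, if_pos hj]
    by_cases hlast : t.1 = k - 1
    · rw [if_pos hlast]
      have hfs : fsucc t = (⟨0, by omega⟩ : Fin k) := fsucc_last (by omega) hlast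
      rw [hfs, liftFam_lt (show (0:ℕ) < 3 by norm_num), List.mem_singleton]
      rfl
    · rw [if_neg hlast]
      have hfs : fsucc t = (⟨t.1 + 1, by omega⟩ : Fin k) := fsucc_of_lt (by omega)
      rw [hfs, liftFam_ge (show ¬ t.1 + 1 < 3 by omega), List.mem_singleton]

lemma family_eq_lift (hP : ValidPrefs P) {F : Fin k → Agent (ι × ι) k}
    (hF : IsFamily (liftP k hk P) F) : ∃ G, IsFamily P G ∧ F = liftFam k G := by
  have hk0 : (0:ℕ) < k := by omega
  have hk1 : (1:ℕ) < k := by omega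
  have hk2 : (2:ℕ) < k := by omega
  have hk3 : (3:ℕ) < k := by omega
  have hs0 : fsucc (⟨0, hk0⟩ : Fin k) = ⟨1, hk1⟩ := by rw [fsucc_of_lt hk1]
  have hs1 : fsucc (⟨1, hk1⟩ : Fin k) = ⟨2, hk2⟩ := by rw [fsucc_of_lt hk2]
  have hs2 : fsucc (⟨2, hk2⟩ : Fin k) = ⟨3, hk3⟩ := by rw [fsucc_of_lt hk3]
  -- position 0
  obtain ⟨h0t, h0m⟩ := hF ⟨0, hk0⟩
  have hx0 : F ⟨0, hk0⟩ = (((F ⟨0, hk0⟩).1.1, (F ⟨0, hk0⟩).1.2), (⟨0, hk0⟩ : Fin k)) :=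
    Prod.ext rfl h0t
  rw [hs0, hx0] at h0m
  obtain ⟨h0ij, c0, hc0, he0⟩ := lift_mem_low hk P (0 : Fin 3) rfl h0m
  rw [hs0, liftIda_ne2 (show ((0:Fin 3)).1 ≠ 2 from by decide)] at he0
  -- position 1
  obtain ⟨h1t, h1m⟩ := hF ⟨1, hk1⟩
  rw [hs1, he0] at h1m
  obtain ⟨-, c1, hc1, he1⟩ := lift_mem_low hk P (1 : Fin 3) rfl h1m
  rw [hs1, liftIda_ne2 (show ((1:Fin 3)).1 ≠ 2 from by decide)] at he1
  have hc1' : (c1.1, (2 : Fin 3)) ∈ P (c0.1, 1) := by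
    have ht : c1.2 = (2 : Fin 3) := by
      have h := hP.2 _ _ hc1
      rw [h]; exact show fsucc (1:Fin 3) = (2:Fin 3) from by decide
    rwa [show c1 = (c1.1, (2 : Fin 3)) from Prod.ext rfl ht] at hc1
  -- position 2
  obtain ⟨h2t, h2m⟩ := hF ⟨2, hk2⟩
  rw [hs2, he1] at h2m
  obtain ⟨-, c2, hc2, he2⟩ := lift_mem_low hk P (2 : Fin 3) rfl h2m
  rw [hs2, liftIda_eq2 (show ((2:Fin 3)).1 = 2 from by decide)] at he2
  have hc2' : (c2.1, (0 : Fin 3)) ∈ P (c1.1, 2) := by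
    have ht : c2.2 = (0 : Fin 3) := by
      have h := hP.2 _ _ hc2
      rw [h]; exact show fsucc (2:Fin 3) = (0:Fin 3) from by decide
    rwa [show c2 = (c2.1, (0 : Fin 3)) from Prod.ext rfl ht] at hc2
  -- tail positions
  have tail : ∀ n, 3 ≤ n → ∀ hn : n < k, F ⟨n, hn⟩ = ((c1.1, c2.1), ⟨n, hn⟩) := by
    intro n hn3
    induction n, hn3 using Nat.le_induction with
    | base => intro hn; exact he2
    | succ n hn3 ih =>
      intro hn1
      have hnk : n < k := by omega
      have hstep := (hF ⟨n, hnk⟩).2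
      rw [fsucc_of_lt (show (⟨n, hnk⟩ : Fin k).1 + 1 < k from hn1), ih hnk] at hstep
      rw [liftP_high hk P c1.1 c2.1 ⟨n, hnk⟩ (by simp; omega), if_pos hc2',
        if_neg (show ¬ (⟨n, hnk⟩ : Fin k).1 = k - 1 by simp; omega),
        fsucc_of_lt (show (⟨n, hnk⟩ : Fin k).1 + 1 < k from hn1),
        List.mem_singleton] at hstep
      exact hstep
  -- wrap-around
  have hklast : k - 1 < k := by omega
  have hlast := (hF ⟨k - 1, hklast⟩).2
  rw [fsucc_last hk0 rfl, tail (k-1) (by omega) hklast] at hlast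
  rw [liftP_high hk P c1.1 c2.1 ⟨k - 1, hklast⟩ (by simp; omega), if_pos hc2', if_pos rfl,
    fsucc_last hk0 rfl, List.mem_singleton] at hlast
  -- hlast : F ⟨0, hk0⟩ = ((c2.1, c2.1), ⟨0, hk0⟩)
  have hc0' : (c0.1, (1 : Fin 3)) ∈ P (c2.1, 0) := by
    have ht : c0.2 = (1 : Fin 3) := by
      have h := hP.2 _ _ hc0
      rw [h]; exact show fsucc (0:Fin 3) = (1:Fin 3) from by decide
    have hi0 : (F ⟨0, hk0⟩).1.1 = c2.1 := by rw [hlast]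
    rw [hi0] at hc0
    rwa [show c0 = (c0.1, (1 : Fin 3)) from Prod.ext rfl ht] at hc0
  refine ⟨fun t : Fin 3 => (if t.1 = 0 then c2.1 else if t.1 = 1 then c0.1 else c1.1, t),
    ?_, ?_⟩
  · intro t
    refine ⟨rfl, ?_⟩
    rcases (show t = 0 ∨ t = 1 ∨ t = 2 from by revert t; decide) with rfl | rfl | rfl
    · rw [show fsucc (0 : Fin 3) = 1 from by decide]
      exact hc0'
    · rw [show fsucc (1 : Fin 3) = 2 from by decide]
      exact hc1'
    · rw [show fsucc (2 : Fin 3) = 0 from by decide]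
      exact hc2'
  · funext t
    rcases Nat.lt_or_ge t.1 3 with h3 | h3
    · rcases (show t.1 = 0 ∨ t.1 = 1 ∨ t.1 = 2 from by omega) with h | h | h
      · rw [show t = ⟨0, hk0⟩ from Fin.ext h, hlast, liftFam_lt (show (0:ℕ) < 3 by norm_num)]
        rfl
      · rw [show t = ⟨1, hk1⟩ from Fin.ext h, he0, liftFam_lt (show (1:ℕ) < 3 by norm_num)]
        rfl
      · rw [show t = ⟨2, hk2⟩ from Fin.ext h, he1, liftFam_lt (show (2:ℕ) < 3 by norm_num)]
        rfl
    · rw [liftFam_ge (by omega)]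
      exact tail t.1 h3 t.2

omit [DecidableEq ι] in
lemma liftFam_low_eq {G : Fin 3 → Agent ι 3} (t3 : Fin 3) (tk : Fin k)
    (h : tk.1 = t3.1) : liftFam k G tk = (((G t3).1, (G t3).1), tk) := by
  have h3 : tk.1 < 3 := h ▸ t3.2
  rw [liftFam_lt h3, show (⟨tk.1, h3⟩ : Fin 3) = t3 from Fin.ext h]

include hk in
lemma liftFam_succ_eq {G : Fin 3 → Agent ι 3} (hG : IsFamily P G) (t3 : Fin 3) (tk : Fin k)
    (h : tk.1 = t3.1) :
    liftFam k G (fsucc tk) = liftIda (G t3) (fsucc tk) (G (fsucc t3)) := by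
  have h3 : tk.1 < 3 := h ▸ t3.2
  by_cases h2 : t3.1 = 2
  · have hk3' : (3:ℕ) < k := by omega
    have ht32 : t3 = 2 := Fin.ext h2
    have hfs : fsucc tk = (⟨3, hk3'⟩ : Fin k) := by
      rw [fsucc_of_lt (show tk.1 + 1 < k by omega)]
      exact Fin.ext (by simp [h, h2])
    have hfs3 : fsucc t3 = 0 := by rw [ht32]; decide
    rw [hfs, hfs3, liftFam_ge (show ¬ (3:ℕ) < 3 by norm_num),
      liftIda_eq2 (show (G t3).2.1 = 2 by rw [(hG t3).1]; exact h2), ht32]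
  · have ht1 : t3.1 + 1 < 3 := by omega
    have hkk : tk.1 + 1 < k := by omega
    have hlt : (tk.1 + 1 : ℕ) < 3 := by omega
    have hfs : fsucc tk = (⟨tk.1 + 1, hkk⟩ : Fin k) := fsucc_of_lt hkk
    have hfs3 : fsucc t3 = ⟨t3.1 + 1, ht1⟩ := fsucc_of_lt ht1
    rw [hfs, hfs3, liftFam_lt (show ((⟨tk.1+1, hkk⟩ : Fin k)).1 < 3 from hlt),
      liftIda_ne2 (show (G t3).2.1 ≠ 2 by rw [(hG t3).1]; exact h2)]
    rw [show (⟨tk.1+1, hlt⟩ : Fin 3) = ⟨t3.1 + 1, ht1⟩ from Fin.ext (by simp [h])]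

lemma prefers_low {μ : Set (Fin 3 → Agent ι 3)} {μh : Set (Fin k → Agent (ι × ι) k)}
    (hP : ValidPrefs P)
    (hμ : IsMatching P μ) (hμh : IsMatching (liftP k hk P) μh)
    (h1 : ∀ G' ∈ μ, liftFam k G' ∈ μh)
    (h2 : ∀ F' ∈ μh, ∃ G' ∈ μ, F' = liftFam k G')
    {G : Fin 3 → Agent ι 3} (hG : IsFamily P G)
    (t3 : Fin 3) (tk : Fin k) (h : tk.1 = t3.1) :
    Prefers (liftP k hk P) (liftFam k G tk) (liftFam k G (fsucc tk))
        (partner μh (liftFam k G tk)) ↔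
      Prefers P (G t3) (G (fsucc t3)) (partner μ (G t3)) := by
  have h3 : tk.1 < 3 := h ▸ t3.2
  have ha2 : (G t3).2 = t3 := (hG t3).1
  have hA : liftFam k G tk = (((G t3).1, (G t3).1), tk) := liftFam_low_eq t3 tk h
  have hlist : liftP k hk P (((G t3).1, (G t3).1), tk) =
      (P (G t3)).map (liftIda (G t3) (fsucc tk)) :=
    liftP_low hk P (G t3) tk (by rw [ha2]; exact h)
  have hb : G (fsucc t3) ∈ P (G t3) := (hG t3).2
  have hbeq : liftFam k G (fsucc tk) = liftIda (G t3) (fsucc tk) (G (fsucc t3)) :=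
    liftFam_succ_eq hk P hG t3 tk h
  have hbt : (G (fsucc t3)).2 = fsucc t3 := (hG (fsucc t3)).1
  have hinj : ∀ c' ∈ P (G t3), liftIda (G t3) (fsucc tk) c' =
      liftIda (G t3) (fsucc tk) (G (fsucc t3)) → c' = G (fsucc t3) := by
    intro c' hc' hfe
    refine liftIda_inj _ _ ?_ hfe
    rw [hbt, hP.2 _ _ hc', ha2]
  by_cases hm : ∃ G' ∈ μ, G' (G t3).2 = G t3
  · obtain ⟨G', hG'mem, hG'a⟩ := hm
    have hG'fam := hμ.1 G' hG'mem
    have hG't : G' t3 = G t3 := by rwa [ha2] at hG'a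
    have hpa : partner μ (G t3) = G' (fsucc t3) := by
      rw [partner_spec hμ hG'mem hG'a, ha2]
    have hlift : liftFam k G' tk = (((G t3).1, (G t3).1), tk) := by
      rw [liftFam_low_eq (G := G') t3 tk h, hG't]
    have hpah : partner μh (((G t3).1, (G t3).1), tk) = liftFam k G' (fsucc tk) :=
      partner_spec hμh (h1 G' hG'mem) hlift
    have hceq : liftFam k G' (fsucc tk) = liftIda (G t3) (fsucc tk) (G' (fsucc t3)) := by
      rw [liftFam_succ_eq hk P hG'fam t3 tk h, hG't]
    have hct : (G' (fsucc t3)).2 = fsucc t3 := (hG'fam (fsucc t3)).1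
    have hinjc : ∀ c' ∈ P (G t3), liftIda (G t3) (fsucc tk) c' =
        liftIda (G t3) (fsucc tk) (G' (fsucc t3)) → c' = G' (fsucc t3) := by
      intro c' hc' hfe
      refine liftIda_inj _ _ ?_ hfe
      rw [hct, hP.2 _ _ hc', ha2]
    rw [hA, hbeq]
    simp only [Prefers]
    rw [hlist, hpa, hpah, hceq]
    have hmemb := mem_map_iff_of_inj (liftIda (G t3) (fsucc tk)) (P (G t3)) _ hinj
    have hmemc := mem_map_iff_of_inj (liftIda (G t3) (fsucc tk)) (P (G t3)) _ hinjc
    constructor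
    · rintro ⟨-, hrest⟩
      refine ⟨hb, ?_⟩
      by_cases hcm : G' (fsucc t3) ∈ P (G t3)
      · rcases hrest with hno | hlt
        · exact absurd (hmemc.2 hcm) hno
        · right
          rwa [indexOf_map_agent _ _ _ hb hinj, indexOf_map_agent _ _ _ hcm hinjc] at hlt
      · exact Or.inl hcm
    · rintro ⟨-, hrest⟩
      refine ⟨hmemb.2 hb, ?_⟩
      by_cases hcm : G' (fsucc t3) ∈ P (G t3)
      · rcases hrest with hno | hlt
        · exact absurd hcm hno
        · right
          rw [indexOf_map_agent _ _ _ hb hinj, indexOf_map_agent _ _ _ hcm hinjc]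
          exact hlt
      · exact Or.inl (fun hmem => hcm (hmemc.1 hmem))
  · have hpa : partner μ (G t3) = G t3 := partner_unmatched hm
    have hmh : ¬ ∃ F' ∈ μh,
        F' (((((G t3).1, (G t3).1), tk) : Agent (ι×ι) k)).2 = (((G t3).1, (G t3).1), tk) := by
      rintro ⟨F', hF'mem, hFt⟩
      obtain ⟨G', hG'mem, rfl⟩ := h2 F' hF'mem
      have hG'fam := hμ.1 G' hG'mem
      rw [liftFam_low_eq (G := G') t3 tk h] at hFt
      have hfst : (G' t3).1 = (G t3).1 := congrArg (fun z => z.1.1) hFt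
      refine hm ⟨G', hG'mem, ?_⟩
      rw [ha2]
      exact Prod.ext hfst ((hG'fam t3).1.trans ha2.symm)
    have hpah := partner_unmatched hmh
    rw [hA, hbeq]
    simp only [Prefers]
    rw [hlist, hpa, hpah]
    have hnotmem : ((((G t3).1, (G t3).1), tk) : Agent (ι×ι) k) ∉
        (P (G t3)).map (liftIda (G t3) (fsucc tk)) := by
      intro hmem
      obtain ⟨c', -, hc'⟩ := List.mem_map.1 hmem
      have hsnd := congrArg Prod.snd hc'
      exact fsucc_ne (show 2 ≤ k by omega) tk (congrArg Fin.val hsnd)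
    have hnotmem2 : G t3 ∉ P (G t3) := by
      intro hmem
      have hx := hP.2 _ _ hmem
      rw [ha2] at hx
      exact fsucc3_ne t3 hx.symm
    exact iff_of_true ⟨List.mem_map_of_mem hb, Or.inl hnotmem⟩ ⟨hb, Or.inl hnotmem2⟩

lemma blocks_transfer {μ : Set (Fin 3 → Agent ι 3)} {μh : Set (Fin k → Agent (ι × ι) k)}
    (hP : ValidPrefs P)
    (hμ : IsMatching P μ) (hμh : IsMatching (liftP k hk P) μh)
    (h1 : ∀ G' ∈ μ, liftFam k G' ∈ μh)
    (h2 : ∀ F' ∈ μh, ∃ G' ∈ μ, F' = liftFam k G')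
    {G : Fin 3 → Agent ι 3} (hG : IsFamily P G) :
    StronglyBlocks P μ G ↔ StronglyBlocks (liftP k hk P) μh (liftFam k G) := by
  constructor
  · rintro ⟨-, hpref⟩
    refine ⟨liftFam_isFamily hk P hG, ?_⟩
    intro tk
    by_cases h3 : tk.1 < 3
    · exact (prefers_low hk P hP hμ hμh h1 h2 hG ⟨tk.1, h3⟩ tk rfl).2 (hpref ⟨tk.1, h3⟩)
    · have hG2 : G 2 = ((G 2).1, 2) := fam_eta hG 2
      have hG0 : G 0 = ((G 0).1, 0) := fam_eta hG 0
      have hj : ((G 0).1, (0:Fin 3)) ∈ P ((G 2).1, (2:Fin 3)) := by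
        have h02 := (hG 2).2
        rwa [show fsucc (2 : Fin 3) = 0 from by decide, hG0, hG2] at h02
      have hFt : liftFam k G tk = (((G 2).1, (G 0).1), tk) := liftFam_ge h3
      have hun : ¬ ∃ F' ∈ μh,
          F' (((((G 2).1, (G 0).1), tk) : Agent (ι×ι) k)).2 = (((G 2).1, (G 0).1), tk) := by
        rintro ⟨F', hF'mem, hFt'⟩
        obtain ⟨G', hG'mem, rfl⟩ := h2 F' hF'mem
        have hG'fam := hμ.1 G' hG'mem
        rw [liftFam_ge h3] at hFt'
        have e2 : (G' 2).1 = (G 2).1 := congrArg (fun z => z.1.1) hFt'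
        have e0 : (G' 0).1 = (G 0).1 := congrArg (fun z => z.1.2) hFt'
        have hg2 : G' (G 2).2 = G 2 := by
          rw [(hG 2).1, fam_eta hG'fam 2, e2]
          exact hG2.symm
        have hg0 : G' 0 = G 0 := by
          rw [fam_eta hG'fam 0, e0]
          exact hG0.symm
        have hpart : partner μ (G 2) = G 0 := by
          rw [partner_spec hμ hG'mem hg2, (hG 2).1,
            show fsucc (2:Fin 3) = 0 from by decide, hg0]
        have hp2 := hpref 2
        rw [hpart, show fsucc (2:Fin 3) = 0 from by decide] at hp2
        obtain ⟨hbm, hrest⟩ := hp2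
        rcases hrest with hno | hlt
        · exact hno hbm
        · exact lt_irrefl _ hlt
      have hpah := partner_unmatched hun
      have hlist : liftP k hk P (((G 2).1, (G 0).1), tk) = [liftFam k G (fsucc tk)] := by
        rw [liftP_high hk P (G 2).1 (G 0).1 tk h3, if_pos hj]
        by_cases hlast : tk.1 = k - 1
        · rw [if_pos hlast]
          have hk0 : (0:ℕ) < k := by omega
          rw [fsucc_last hk0 hlast, liftFam_lt (show (0:ℕ) < 3 by norm_num)]
          rfl
        · rw [if_neg hlast]
          have hkk : tk.1 + 1 < k := by omega
          rw [fsucc_of_lt hkk, liftFam_ge (show ¬ ((⟨tk.1+1, hkk⟩ : Fin k)).1 < 3 by simp; omega)]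
      rw [hFt]
      simp only [Prefers]
      rw [hlist, hpah]
      refine ⟨List.mem_singleton_self _, Or.inl ?_⟩
      rw [List.mem_singleton]
      intro hcon
      have hsnd := congrArg Prod.snd hcon
      rw [liftFam_snd] at hsnd
      exact fsucc_ne (show 2 ≤ k by omega) tk (congrArg Fin.val hsnd).symm
  · rintro ⟨-, hpref⟩
    refine ⟨hG, ?_⟩
    intro t3
    have h3k : (t3.1 : ℕ) < k := by have := t3.2; omega
    exact (prefers_low hk P hP hμ hμh h1 h2 hG t3 ⟨t3.1, h3k⟩ rfl).1 (hpref ⟨t3.1, h3k⟩)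

include hk in
lemma liftFam_inj {G G' : Fin 3 → Agent ι 3} (hG : IsFamily P G) (hG' : IsFamily P G')
    (h : liftFam k G = liftFam k G') : G = G' := by
  funext s
  have hsk : (s.1 : ℕ) < k := by have := s.2; omega
  have h1 := congrFun h ⟨s.1, hsk⟩
  rw [liftFam_lt (G := G) (tk := ⟨s.1, hsk⟩) s.2,
    liftFam_lt (G := G') (tk := ⟨s.1, hsk⟩) s.2] at h1
  have hfst : (G s).1 = (G' s).1 := congrArg (fun z => z.1.1) h1
  exact Prod.ext hfst ((hG s).1.trans ((hG' s).1).symm)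

end DimLift


/-- For `k ≥ 4`, the `k`-DSMI-CYC instance produced by the
dimension-lifting reduction from a 3-DSMI-CYC instance `P` has a weakly stable matching
iff `P` does. -/
theorem lift_weaklyStable_iff {ι : Type} [DecidableEq ι] (k : ℕ) (hk : 4 ≤ k)
    (P : Prefs ι 3) (hP : ValidPrefs P) :
    (∃ μhat : Set (Fin k → Agent (ι × ι) k), WeaklyStable (liftP k hk P) μhat) ↔
      ∃ μ : Set (Fin 3 → Agent ι 3), WeaklyStable P μ := by
  constructor
  · rintro ⟨μh, hμh, hstab⟩
    have h1 : ∀ G' ∈ {G | IsFamily P G ∧ liftFam k G ∈ μh}, liftFam k G' ∈ μh :=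
      fun G' hh => hh.2
    have h2 : ∀ F' ∈ μh, ∃ G' ∈ {G | IsFamily P G ∧ liftFam k G ∈ μh},
        F' = liftFam k G' := by
      intro F' hF'
      obtain ⟨G', hfam, rfl⟩ := family_eq_lift hk P hP (hμh.1 F' hF')
      exact ⟨G', ⟨hfam, hF'⟩, rfl⟩
    have hmatch : IsMatching P {G | IsFamily P G ∧ liftFam k G ∈ μh} := by
      refine ⟨fun G hh => hh.1, ?_⟩
      intro G hGm G' hG'm t htt
      have htk : (t.1 : ℕ) < k := by have := t.2; omega
      have he : liftFam k G = liftFam k G' := by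
        refine hμh.2 _ hGm.2 _ hG'm.2 ⟨t.1, htk⟩ ?_
        rw [liftFam_lt (G := G) (tk := ⟨t.1, htk⟩) t.2,
          liftFam_lt (G := G') (tk := ⟨t.1, htk⟩) t.2]
        exact congrArg (fun p => (((p.1 : ι), p.1), (⟨t.1, htk⟩ : Fin k))) htt
      exact liftFam_inj hk P hGm.1 hG'm.1 he
    refine ⟨{G | IsFamily P G ∧ liftFam k G ∈ μh}, hmatch, ?_⟩
    intro G hblock
    exact hstab _ ((blocks_transfer hk P hP hmatch hμh h1 h2 hblock.1).1 hblock)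
  · rintro ⟨μ, hμ, hstab⟩
    have h1 : ∀ G' ∈ μ, liftFam k G' ∈ liftFam k '' μ :=
      fun G' hh => Set.mem_image_of_mem _ hh
    have h2 : ∀ F' ∈ liftFam k '' μ, ∃ G' ∈ μ, F' = liftFam k G' := by
      rintro F' ⟨G', hG', rfl⟩
      exact ⟨G', hG', rfl⟩
    have hmatchh : IsMatching (liftP k hk P) (liftFam k '' μ) := by
      constructor
      · rintro F ⟨G, hGm, rfl⟩
        exact liftFam_isFamily hk P (hμ.1 G hGm)
      · rintro F ⟨G, hGm, rfl⟩ F' ⟨G', hG'm, rfl⟩ t htt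
        have hGf := hμ.1 G hGm
        have hG'f := hμ.1 G' hG'm
        have hGG' : G = G' := by
          by_cases h3 : t.1 < 3
          · rw [liftFam_lt (G := G) h3, liftFam_lt (G := G') h3] at htt
            have hfst : (G ⟨t.1, h3⟩).1 = (G' ⟨t.1, h3⟩).1 := congrArg (fun z => z.1.1) htt
            refine hμ.2 G hGm G' hG'm ⟨t.1, h3⟩ ?_
            exact Prod.ext hfst ((hGf ⟨t.1, h3⟩).1.trans ((hG'f ⟨t.1, h3⟩).1).symm)
          · rw [liftFam_ge (G := G) h3, liftFam_ge (G := G') h3] at htt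
            have hfst : (G 2).1 = (G' 2).1 := congrArg (fun z => z.1.1) htt
            refine hμ.2 G hGm G' hG'm 2 ?_
            exact Prod.ext hfst ((hGf 2).1.trans ((hG'f 2).1).symm)
        rw [hGG']
    refine ⟨liftFam k '' μ, hmatchh, ?_⟩
    intro F hblock
    obtain ⟨G, hGf, rfl⟩ := family_eq_lift hk P hP hblock.1
    exact hstab G ((blocks_transfer hk P hP hμ hmatchh h1 h2 hGf).2 hblock)
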